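/- arXiv:1110.3600 — 4 statements merged into one kernel-verified Lean document; each statement's English description precedes it below -/
import Mathlib

section
/- If (S,R) is a positive presentation such that every relation v = v' of R satisfies |len(v) − len(v')| ≤ 2, then for all words w, w' over S ∪ S⁻¹, the relation w ⇝_{0,D} w' (obtained from w by type 0 transformations and Dehn transformations with respect to R) implies w ⇝_{0,1,2} w' (obtained by special transformations of types 0, 1, 2). -/
/-!
The word `u⁻¹u'` of a Dehn transformation reads the cyclic word `v⁻¹v'` from some point on, so
`u'` is an arc of this cyclic word and `u⁻¹` the complementary, longer arc. The cyclic word changes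
sign at two places. If neither lies inside `u'`, then `u'` is a factor of `v'` or of `v⁻¹`, and
`u ↦ u'` is a type 1 replacement followed by free cancellations. If exactly one does, `u ↦ u'` is a
subword reversing of type 2, except when a side of the reversing relation is empty, where the length
bound forces it to be of type 1. If both do, `u⁻¹` lies inside one block and is longer than the rest
of the cycle, which the length bound only allows when `u⁻¹` is a whole side of the relation.
-/

namespace ArtinConj

/-- A word over `S ∪ S⁻¹`: a letter is a generator together with a sign
(`true` = positive letter `s`, `false` = negative letter `s⁻¹`). -/
abbrev Word (S : Type) := List (S × Bool)

/-- The positive word associated to a list of generators. -/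
def pos {S : Type} (v : List S) : Word S := v.map fun s => (s, true)

/-- The formal inverse of a word. -/
def winv {S : Type} (w : Word S) : Word S := (w.map fun p => (p.1, !p.2)).reverse

/-- A presentation `(S, R)` is positive if all relations `v = v'` have both
sides nonempty positive words. -/
def Positive {S : Type} (R : Set (List S × List S)) : Prop :=
  ∀ p ∈ R, p.1 ≠ [] ∧ p.2 ≠ []

/-- `v = v'` is a relation of `R` (relations are unoriented). -/
def InR {S : Type} (R : Set (List S × List S)) (v v' : List S) : Prop :=
  (v, v') ∈ R ∨ (v', v) ∈ R

/-- Special transformations of types `0`, `1`, `2ℓ`, `2r` associated with a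
positive presentation. -/
inductive Step {S : Type} (R : Set (List S × List S)) : Word S → Word S → Prop
  /-- type 0 : remove a trivial pair `s s⁻¹` or `s⁻¹ s`. -/
  | free (w₁ w₂ : Word S) (s : S) (e : Bool) :
      Step R (w₁ ++ [(s, e), (s, !e)] ++ w₂) (w₁ ++ w₂)
  /-- type 1 : replace a factor `v` by `v'` for a relation `v = v'`. -/
  | rel (w₁ w₂ : Word S) (v v' : List S) (h : InR R v v') :
      Step R (w₁ ++ pos v ++ w₂) (w₁ ++ pos v' ++ w₂)
  /-- type 1 : replace a factor `v⁻¹` by `v'⁻¹` for a relation `v = v'`. -/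
  | relInv (w₁ w₂ : Word S) (v v' : List S) (h : InR R v v') :
      Step R (w₁ ++ winv (pos v) ++ w₂) (w₁ ++ winv (pos v') ++ w₂)
  /-- type 2r : replace `v⁻¹ v'` by `u u'⁻¹` where `v u = v' u'` is a relation,
  `v, v'` nonempty. -/
  | rev2r (w₁ w₂ : Word S) (v v' u u' : List S) (hv : v ≠ []) (hv' : v' ≠ [])
      (h : InR R (v ++ u) (v' ++ u')) :
      Step R (w₁ ++ winv (pos v) ++ pos v' ++ w₂) (w₁ ++ pos u ++ winv (pos u') ++ w₂)
  /-- type 2ℓ : replace `v v'⁻¹` by `u⁻¹ u'` where `u v = u' v'` is a relation,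
  `v, v'` nonempty. -/
  | rev2l (w₁ w₂ : Word S) (v v' u u' : List S) (hv : v ≠ []) (hv' : v' ≠ [])
      (h : InR R (u ++ v) (u' ++ v')) :
      Step R (w₁ ++ pos v ++ winv (pos v') ++ w₂) (w₁ ++ winv (pos u) ++ pos u' ++ w₂)

/-- `w ⇝_{0,1,2} w'`. -/
def Rw {S : Type} (R : Set (List S × List S)) : Word S → Word S → Prop :=
  Relation.ReflTransGen (Step R)

/-- Evaluation of a word in a group, given an interpretation of the generators. -/
def evalW {S G : Type} [Group G] (f : S → G) (w : Word S) : G :=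
  (w.map fun p => if p.2 then f p.1 else (f p.1)⁻¹).prod

/-- The set of elements of the free group corresponding to the relations of `R`. -/
def rels {S : Type} (R : Set (List S × List S)) : Set (FreeGroup S) :=
  {x | ∃ p ∈ R, x = evalW FreeGroup.of (pos p.1) * (evalW FreeGroup.of (pos p.2))⁻¹}

/-- The element of the presented group `⟨S | R⟩` represented by a word. -/
def evalG {S : Type} (R : Set (List S × List S)) (w : Word S) :
    PresentedGroup (rels R) :=
  evalW (fun s => (PresentedGroup.of s : PresentedGroup (rels R))) w

/-- Property `H` : every word representing `1` can be transformed to the empty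
word using special transformations of types `0`, `1`, `2` only. -/
def PropertyH {S : Type} (R : Set (List S × List S)) : Prop :=
  ∀ w : Word S, evalG R w = 1 → Rw R w []


/-- `y` is a cyclic permutation of `x`. -/
def CyclicPerm {S : Type} (x y : Word S) : Prop :=
  ∃ a b : Word S, x = a ++ b ∧ y = b ++ a

/-- Type `0` transformations together with Dehn transformations with respect
to `R`: replace a factor `u` by a strictly shorter `u'` such that `u⁻¹ u'` is a
cyclic permutation of `v⁻¹ v'` or `v'⁻¹ v` for some relation `v = v'` of `R`. -/
inductive DehnStep {S : Type} (R : Set (List S × List S)) : Word S → Word S → Prop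
  | free (w₁ w₂ : Word S) (s : S) (e : Bool) :
      DehnStep R (w₁ ++ [(s, e), (s, !e)] ++ w₂) (w₁ ++ w₂)
  | dehn (w₁ w₂ u u' : Word S) (hlen : u'.length < u.length)
      (h : ∃ v v' : List S, InR R v v' ∧
        CyclicPerm (winv (pos v) ++ pos v') (winv u ++ u')) :
      DehnStep R (w₁ ++ u ++ w₂) (w₁ ++ u' ++ w₂)

variable {S : Type} {R : Set (List S × List S)}

@[simp] theorem pos_nil : pos ([] : List S) = [] := rfl

@[simp] theorem winv_nil : winv ([] : Word S) = [] := rfl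

@[simp] theorem pos_append (x y : List S) : pos (x ++ y) = pos x ++ pos y :=
  List.map_append

@[simp] theorem winv_append (x y : Word S) : winv (x ++ y) = winv y ++ winv x := by
  simp [winv]

@[simp] theorem winv_winv (x : Word S) : winv (winv x) = x := by
  simp [winv, Function.comp_def]

@[simp] theorem length_pos (v : List S) : (pos v).length = v.length :=
  List.length_map _

@[simp] theorem length_winv (x : Word S) : (winv x).length = x.length := by
  simp [winv]

theorem exists_of_pos_eq_append {v : List S} {a b : Word S} (h : pos v = a ++ b) :
    ∃ v₁ v₂, v = v₁ ++ v₂ ∧ a = pos v₁ ∧ b = pos v₂ := by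
  obtain ⟨v₁, v₂, rfl, ha, hb⟩ := List.map_eq_append_iff.mp h
  exact ⟨v₁, v₂, rfl, ha.symm, hb.symm⟩

theorem exists_of_winv_pos_eq_append {v : List S} {a b : Word S} (h : winv (pos v) = a ++ b) :
    ∃ v₁ v₂, v = v₁ ++ v₂ ∧ a = winv (pos v₂) ∧ b = winv (pos v₁) := by
  obtain ⟨v₁, v₂, hv, hb, ha⟩ :=
    exists_of_pos_eq_append (by simpa using congrArg winv h : pos v = winv b ++ winv a)
  exact ⟨v₁, v₂, hv, by rw [← ha, winv_winv], by rw [← hb, winv_winv]⟩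

theorem suffix_cases_of_append_eq_append {α : Type*} {U u' X Y Z : List α}
    (h : U ++ u' = X ++ Y ++ Z) :
    (∃ Z₁, Z = Z₁ ++ u' ∧ U = X ++ Y ++ Z₁) ∨
    (∃ Y₁ Y₂, Y = Y₁ ++ Y₂ ∧ u' = Y₂ ++ Z ∧ U = X ++ Y₁) ∨
    (∃ X₁ X₂, X = X₁ ++ X₂ ∧ u' = X₂ ++ Y ++ Z ∧ U = X₁) := by
  rcases List.append_eq_append_iff.mp h with ⟨a, hXY, rfl⟩ | ⟨c, rfl, rfl⟩
  · rcases List.append_eq_append_iff.mp hXY with ⟨b, rfl, rfl⟩ | ⟨c, rfl, rfl⟩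
    · exact .inr (.inl ⟨b, a, rfl, rfl, rfl⟩)
    · exact .inr (.inr ⟨U, c, rfl, by simp, rfl⟩)
  · exact .inl ⟨c, rfl, rfl⟩

theorem InR.symm {v v' : List S} (h : InR R v v') : InR R v' v := Or.symm h

theorem InR.length_le {v v' : List S}
    (hlen : ∀ p ∈ R, |(p.1.length : ℤ) - (p.2.length : ℤ)| ≤ 2) (h : InR R v v') :
    v.length ≤ v'.length + 2 := by
  rcases h with h | h <;> have := abs_le.mp (hlen _ h) <;> simp only at this <;> omega

theorem Step.wrap (a b : Word S) {x y : Word S} (h : Step R x y) :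
    Step R (a ++ x ++ b) (a ++ y ++ b) := by
  cases h with
  | free w₁ w₂ s e => simpa using Step.free (R := R) (a ++ w₁) (w₂ ++ b) s e
  | rel w₁ w₂ v v' h => simpa using Step.rel (a ++ w₁) (w₂ ++ b) v v' h
  | relInv w₁ w₂ v v' h => simpa using Step.relInv (a ++ w₁) (w₂ ++ b) v v' h
  | rev2r w₁ w₂ v v' u u' hv hv' h =>
    simpa using Step.rev2r (a ++ w₁) (w₂ ++ b) v v' u u' hv hv' h
  | rev2l w₁ w₂ v v' u u' hv hv' h =>
    simpa using Step.rev2l (a ++ w₁) (w₂ ++ b) v v' u u' hv hv' h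

theorem Rw.wrap (a b : Word S) {x y : Word S} (h : Rw R x y) : Rw R (a ++ x ++ b) (a ++ y ++ b) :=
  Relation.ReflTransGen.lift (fun x => a ++ x ++ b) (fun _ _ => Step.wrap a b) _ _ h

theorem Rw.single {x y : Word S} (h : Step R x y) : Rw R x y := Relation.ReflTransGen.single h

theorem Rw.trans {x y z : Word S} (h : Rw R x y) (h' : Rw R y z) : Rw R x z :=
  Relation.ReflTransGen.trans h h'

theorem Rw.append {x x' y y' : Word S} (hx : Rw R x x') (hy : Rw R y y') :
    Rw R (x ++ y) (x' ++ y') := by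
  simpa using (hx.wrap [] y).trans (by simpa using hy.wrap x' [])

theorem rw_winv_append_cancel (x : Word S) : Rw R (winv x ++ x) [] := by
  induction x with
  | nil => exact Relation.ReflTransGen.refl
  | cons p t ih =>
    refine Relation.ReflTransGen.head ?_ ih
    simpa [winv] using Step.free (R := R) (winv t) t p.1 (!p.2)

theorem rw_append_winv_cancel (x : Word S) : Rw R (x ++ winv x) [] := by
  simpa using rw_winv_append_cancel (R := R) (winv x)

theorem rw_rel_cancel {v x m y : List S} (hR : InR R v (x ++ m ++ y)) :
    Rw R (winv (pos x) ++ pos v ++ winv (pos y)) (pos m) := by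
  have hrel : Rw R (winv (pos x) ++ pos v ++ winv (pos y))
      ((winv (pos x) ++ pos x) ++ pos m ++ (pos y ++ winv (pos y))) := by
    simpa using Rw.single (Step.rel (winv (pos x)) (winv (pos y)) _ _ hR)
  simpa using hrel.trans
    (((rw_winv_append_cancel _).append .refl).append (rw_append_winv_cancel _))

theorem rw_relInv_cancel {v' x m y : List S} (hR : InR R (x ++ m ++ y) v') :
    Rw R (pos y ++ winv (pos v') ++ pos x) (winv (pos m)) := by
  have hrel : Rw R (pos y ++ winv (pos v') ++ pos x)
      ((pos y ++ winv (pos y)) ++ winv (pos m) ++ (winv (pos x) ++ pos x)) := by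
    simpa using Rw.single (Step.relInv (pos y) (pos x) _ _ hR.symm)
  simpa using hrel.trans
    (((rw_append_winv_cancel _).append .refl).append (rw_winv_append_cancel _))

section LengthBound

variable (hlen : ∀ p ∈ R, |(p.1.length : ℤ) - (p.2.length : ℤ)| ≤ 2)
include hlen

theorem rw_rev2l_of_length {p q r s : List S} (hR : InR R (p ++ r) (q ++ s))
    (hl : p.length + q.length < r.length + s.length) :
    Rw R (pos r ++ winv (pos s)) (winv (pos p) ++ pos q) := by
  have h₁ := hR.length_le hlen
  have h₂ := hR.symm.length_le hlen
  simp only [List.length_append] at h₁ h₂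
  by_cases hr : r = []
  · subst hr
    obtain rfl : q = [] := List.eq_nil_of_length_eq_zero (by simp at hl h₁ h₂; omega)
    simpa using Rw.single (Step.relInv [] [] _ _ (by simpa using hR.symm))
  by_cases hs : s = []
  · subst hs
    obtain rfl : p = [] := List.eq_nil_of_length_eq_zero (by simp at hl h₁ h₂; omega)
    simpa using Rw.single (Step.rel [] [] _ _ (by simpa using hR))
  simpa using Rw.single (Step.rev2l [] [] r s p q hr hs hR)

theorem rw_rev2r_of_length {p q r s : List S} (hR : InR R (s ++ q) (r ++ p))
    (hl : q.length + p.length < s.length + r.length) :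
    Rw R (winv (pos s) ++ pos r) (pos q ++ winv (pos p)) := by
  have h₁ := hR.length_le hlen
  have h₂ := hR.symm.length_le hlen
  simp only [List.length_append] at h₁ h₂
  by_cases hs : s = []
  · subst hs
    obtain rfl : p = [] := List.eq_nil_of_length_eq_zero (by simp at hl h₁ h₂; omega)
    simpa using Rw.single (Step.rel [] [] _ _ (by simpa using hR.symm))
  by_cases hr : r = []
  · subst hr
    obtain rfl : q = [] := List.eq_nil_of_length_eq_zero (by simp at hl h₁ h₂; omega)
    simpa using Rw.single (Step.relInv [] [] _ _ (by simpa using hR))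
  simpa using Rw.single (Step.rev2r [] [] s r q p hs hr hR)

theorem rw_relInv_of_length {v x m y : List S} (hR : InR R v (x ++ m ++ y))
    (hl : y.length + v.length + x.length < m.length) :
    Rw R (winv (pos m)) (pos y ++ winv (pos v) ++ pos x) := by
  have h₂ := hR.symm.length_le hlen
  simp only [List.length_append] at h₂
  obtain rfl : x = [] := List.eq_nil_of_length_eq_zero (by omega)
  obtain rfl : y = [] := List.eq_nil_of_length_eq_zero (by omega)
  simpa using Rw.single (Step.relInv [] [] _ _ (by simpa using hR.symm))

theorem rw_rel_of_length {v' x m y : List S} (hR : InR R (x ++ m ++ y) v')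
    (hl : x.length + v'.length + y.length < m.length) :
    Rw R (pos m) (winv (pos x) ++ pos v' ++ winv (pos y)) := by
  have h₁ := hR.length_le hlen
  simp only [List.length_append] at h₁
  obtain rfl : x = [] := List.eq_nil_of_length_eq_zero (by omega)
  obtain rfl : y = [] := List.eq_nil_of_length_eq_zero (by omega)
  simpa using Rw.single (Step.rel [] [] _ _ (by simpa using hR))

theorem rw_of_rotation_cut_pos {u u' : Word S} {v b c : List S} (hR : InR R v (c ++ b))
    (hu : winv u ++ u' = pos b ++ winv (pos v) ++ pos c) (hl : u'.length < u.length) :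
    Rw R u u' := by
  rw [← winv_winv u] at hl ⊢
  rcases suffix_cases_of_append_eq_append hu with
    ⟨Z₁, hZ, hU⟩ | ⟨Y₁, Y₂, hY, rfl, hU⟩ | ⟨X₁, X₂, hX, rfl, hU⟩
  · obtain ⟨c₁, c₂, rfl, rfl, rfl⟩ := exists_of_pos_eq_append hZ
    simpa [hU] using rw_rel_cancel (R := R) (by simpa using hR)
  · obtain ⟨v₁, v₂, rfl, rfl, rfl⟩ := exists_of_winv_pos_eq_append hY
    simp only [hU, length_winv, List.length_append, length_pos] at hl
    simpa [hU] using rw_rev2l_of_length hlen hR (by omega)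
  · obtain ⟨b₁, b₂, rfl, rfl, rfl⟩ := exists_of_pos_eq_append hX
    simp only [hU, length_winv, List.length_append, length_pos] at hl
    simpa [hU] using rw_relInv_of_length hlen (by simpa using hR) (by omega)

theorem rw_of_rotation_cut_neg {u u' : Word S} {v₁ v₂ v' : List S} (hR : InR R (v₁ ++ v₂) v')
    (hu : winv u ++ u' = winv (pos v₁) ++ pos v' ++ winv (pos v₂)) (hl : u'.length < u.length) :
    Rw R u u' := by
  rw [← winv_winv u] at hl ⊢
  rcases suffix_cases_of_append_eq_append hu with
    ⟨Z₁, hZ, hU⟩ | ⟨Y₁, Y₂, hY, rfl, hU⟩ | ⟨X₁, X₂, hX, rfl, hU⟩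
  · obtain ⟨t₁, t₂, rfl, rfl, rfl⟩ := exists_of_winv_pos_eq_append hZ
    simpa [hU] using rw_relInv_cancel (R := R) (by simpa using hR)
  · obtain ⟨q₁, q₂, rfl, rfl, rfl⟩ := exists_of_pos_eq_append hY
    simp only [hU, length_winv, List.length_append, length_pos] at hl
    simpa [hU] using rw_rev2r_of_length hlen hR.symm (by omega)
  · obtain ⟨a₁, a₂, rfl, rfl, rfl⟩ := exists_of_winv_pos_eq_append hX
    simp only [hU, length_winv, List.length_append, length_pos] at hl
    simpa [hU] using rw_rel_of_length hlen (by simpa using hR) (by omega)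

theorem rw_of_cyclicPerm {u u' : Word S} {v v' : List S} (hR : InR R v v')
    (hc : CyclicPerm (winv (pos v) ++ pos v') (winv u ++ u')) (hl : u'.length < u.length) :
    Rw R u u' := by
  obtain ⟨a, b, hab, hba⟩ := hc
  rcases List.append_eq_append_iff.mp hab with ⟨c, rfl, hc⟩ | ⟨c, hc, rfl⟩
  · obtain ⟨c₀, b₀, rfl, rfl, rfl⟩ := exists_of_pos_eq_append hc
    exact rw_of_rotation_cut_pos hlen hR (by simpa using hba) hl
  · obtain ⟨v₁, v₂, rfl, rfl, rfl⟩ := exists_of_winv_pos_eq_append hc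
    exact rw_of_rotation_cut_neg hlen hR (by simpa using hba) hl

theorem DehnStep.rw {w w' : Word S} (h : DehnStep R w w') : Rw R w w' := by
  cases h with
  | free w₁ w₂ s e => exact Rw.single (Step.free w₁ w₂ s e)
  | dehn w₁ w₂ u u' hl h =>
    obtain ⟨v, v', hR, hc⟩ := h
    exact (rw_of_cyclicPerm hlen hR hc hl).wrap w₁ w₂

end LengthBound

theorem dehn_implies_special_general {S : Type}
    (R : Set (List S × List S))
    (hlen : ∀ p ∈ R, |(p.1.length : ℤ) - (p.2.length : ℤ)| ≤ 2)
    (w w' : Word S) (h : Relation.ReflTransGen (DehnStep R) w w') :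
    Rw R w w' :=
  Relation.reflTransGen_closed (fun _ _ => DehnStep.rw hlen) w w' h

/-- if every relation `v = v'` of the positive presentation `(S,R)`
satisfies `|len v − len v'| ≤ 2`, then `w ⇝_{0,D} w'` implies `w ⇝_{0,1,2} w'`. -/
theorem dehn_implies_special {S : Type}
    (R : Set (List S × List S)) (hpos : Positive R)
    (hlen : ∀ p ∈ R, |(p.1.length : ℤ) - (p.2.length : ℤ)| ≤ 2)
    (w w' : Word S) (h : Relation.ReflTransGen (DehnStep R) w w') :
    Rw R w w' :=
  dehn_implies_special_general R hlen w w' h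

end ArtinConj
end

section
/- With the notation of S₀-minimal elements in a spherical Artin–Tits group: if g ∈ G is S₀-minimal, then its left numerator N_ℓ(g) is also S₀-minimal. -/
namespace ArtinConj

/-- Two elements of the submonoid `M` are left-coprime if they admit no
nontrivial common left-divisor in `M`. -/
def LeftCoprime {G : Type} [Group G] (M : Submonoid G) (a b : M) : Prop :=
  ∀ c : M, (∃ x : M, c * x = a) → (∃ y : M, c * y = b) → c = 1

/-- `g` is `S₀`-minimal (with respect to the left-fraction decomposition
`g = Dl(g)⁻¹ Nl(g)`, the length function `ℓ`, and the subgroup `H = ⟨S₀⟩`):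
for every `h ∈ H`, `ℓ(Dl(gh)) ≥ ℓ(Dl g)`, and in case of equality
`ℓ(Nl(gh)) ≥ ℓ(Nl g)`. -/
def S0Minimal {G : Type} [Group G] (M : Submonoid G) (ℓ : M → ℕ)
    (Dl Nl : G → M) (H : Subgroup G) (g : G) : Prop :=
  ∀ h ∈ H, ℓ (Dl g) ≤ ℓ (Dl (g * h)) ∧
    (ℓ (Dl (g * h)) = ℓ (Dl g) → ℓ (Nl g) ≤ ℓ (Nl (g * h)))

/-- if `g ∈ G` is `S₀`-minimal, then its left numerator `Nl(g)` is
also `S₀`-minimal. -/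
theorem numerator_s0Minimal {G : Type} [Group G] (M : Submonoid G)
    (ℓ : M → ℕ)
    (hadd : ∀ a b : M, ℓ (a * b) = ℓ a + ℓ b)
    (hzero : ∀ a : M, ℓ a = 0 ↔ a = 1)
    (hinv : ∀ a : M, IsUnit a → a = 1)
    (Dl Nl : G → M)
    (hDN : ∀ g : G, g = (Dl g : G)⁻¹ * (Nl g : G))
    (hcop : ∀ g : G, LeftCoprime M (Dl g) (Nl g))
    (huniq : ∀ (g : G) (a b : M),
      g = (a : G)⁻¹ * (b : G) → LeftCoprime M a b → a = Dl g ∧ b = Nl g)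
    (S₀ : Set G) (hS₀ : S₀ ⊆ (M : Set G))
    (g : G) (hg : S0Minimal M ℓ Dl Nl (Subgroup.closure S₀) g) :
    S0Minimal M ℓ Dl Nl (Subgroup.closure S₀) ((Nl g : G)) := by
  classical
  -- `1` is left-coprime with anything.
  have cop1 : ∀ b : M, LeftCoprime M 1 b := by
    intro b c hc _
    obtain ⟨x, hx⟩ := hc
    refine hinv c ⟨⟨c, x, hx, ?_⟩, rfl⟩
    have hGx : (c : G) * (x : G) = 1 := by
      exact_mod_cast congrArg (Subtype.val) hx
    have : (x : G) * (c : G) = 1 := by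
      rw [eq_inv_of_mul_eq_one_right hGx]
      group
    exact Subtype.ext this
  -- Reduction lemma: any left-fraction expression bounds the canonical one.
  have key : ∀ (k : ℕ) (a b : M) (w : G), ℓ a ≤ k → w = (a : G)⁻¹ * (b : G) →
      ℓ (Dl w) ≤ ℓ a ∧ (ℓ (Dl w) = ℓ a → ℓ (Nl w) ≤ ℓ b) := by
    intro k
    induction k with
    | zero =>
        intro a b w hk hw
        have ha : a = 1 := (hzero a).mp (Nat.le_zero.mp hk)
        subst ha
        obtain ⟨h1, h2⟩ := huniq w 1 b hw (cop1 b)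
        constructor
        · rw [← h1]
        · intro _; rw [← h2]
    | succ k ih =>
        intro a b w hk hw
        by_cases hc : LeftCoprime M a b
        · obtain ⟨h1, h2⟩ := huniq w a b hw hc
          constructor
          · rw [← h1]
          · intro _; rw [← h2]
        · -- extract a nontrivial common left-divisor
          simp only [LeftCoprime, not_forall] at hc
          obtain ⟨c, ⟨x, hx⟩, ⟨y, hy⟩, hc1⟩ := hc
          have hlc : 1 ≤ ℓ c := by
            rcases Nat.eq_zero_or_pos (ℓ c) with h | h
            · exact absurd ((hzero c).mp h) hc1
            · exact h
          have hla : ℓ a = ℓ c + ℓ x := by rw [← hx, hadd]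
          have hxk : ℓ x ≤ k := by omega
          have hw' : w = (x : G)⁻¹ * (y : G) := by
            rw [hw, ← hx, ← hy]
            push_cast
            group
          obtain ⟨h1, h2⟩ := ih x y w hxk hw'
          constructor
          · omega
          · intro heq; omega
  -- `Nl g` lies in `M`, so its decomposition is trivial.
  have hpure : (1 : M) = Dl ((Nl g : G)) ∧ Nl g = Nl ((Nl g : G)) := by
    refine huniq _ 1 (Nl g) (by simp) (cop1 _)
  intro h hh
  have hD0 : ℓ (Dl ((Nl g : G))) = 0 := by
    rw [← hpure.1]; exact (hzero 1).mpr rfl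
  constructor
  · omega
  · intro heq
    have hD1 : Dl ((Nl g : G) * h) = 1 := (hzero _).mp (by omega)
    -- so `(Nl g) * h = Nl ((Nl g) * h)` in `G`
    have hwM : (Nl g : G) * h = (Nl ((Nl g : G) * h) : G) := by
      conv_lhs => rw [hDN ((Nl g : G) * h)]
      rw [hD1]
      simp
    -- express `g * h` as a fraction with denominator `Dl g`
    have hgh : g * h = (Dl g : G)⁻¹ * (Nl ((Nl g : G) * h) : G) := by
      rw [← hwM, ← mul_assoc, ← hDN g]
    obtain ⟨k1, k2⟩ := key (ℓ (Dl g)) (Dl g) (Nl ((Nl g : G) * h)) (g * h) le_rfl hgh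
    obtain ⟨m1, m2⟩ := hg h hh
    have heq' : ℓ (Dl (g * h)) = ℓ (Dl g) := le_antisymm k1 m1
    have := m2 heq'
    have := k2 heq'
    rw [← hpure.2]
    omega

end ArtinConj
end

section
/- If (S₁,R₁) and (S₂,R₂) are positive group presentations in amalgam position, then (S₁∪S₂, R₁∪R₂) is a presentation of the amalgamated product ⟨S₁|R₁⟩ *_{G'} ⟨S₂|R₂⟩, where G' is the subgroup generated by S₁∩S₂ (identified in both factors). -/
/-! Both groups have the same universal property. A homomorphism out of the pushout is a pair of
homomorphisms out of `⟨S₁|R₁⟩` and `⟨S₂|R₂⟩` that agree on `G'`; as `G'` is generated by the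
common generators, this means agreeing on `S₁ ∩ S₂`, i.e. it is a single map on `S₁ ∪ S₂` that
satisfies `R₁ ∪ R₂`. The one non-formal point is that a common generator has the same image in
both factors of the pushout, because it comes from `G'`. -/

namespace ArtinConj

open Monoid

/-- The two-element family of types consisting of `G₁` and `G₂`. -/
def Gfam (G₁ G₂ : Type) : Bool → Type
  | true => G₁
  | false => G₂

instance {G₁ G₂ : Type} [Group G₁] [Group G₂] : ∀ b, Group (Gfam G₁ G₂ b)
  | true => inferInstanceAs (Group G₁)
  | false => inferInstanceAs (Group G₂)

/-- The inclusion of subtypes induced by an inclusion of subsets. -/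
def incl {S : Type} {A B : Set S} (h : A ⊆ B) : ↥A → ↥B := fun s => ⟨s.1, h s.2⟩

/-- The subgroup of `⟨Sᵢ | Rᵢ⟩` generated by the common generators `C ⊆ Sᵢ`. -/
def commonSubgroup {S : Type} {C Sᵢ : Set S} (h : C ⊆ Sᵢ)
    (Rᵢ : Set (List ↥Sᵢ × List ↥Sᵢ)) : Subgroup (PresentedGroup (rels Rᵢ)) :=
  Subgroup.closure (Set.range fun s : ↥C =>
    (PresentedGroup.of (incl h s) : PresentedGroup (rels Rᵢ)))

section Words

variable {S G : Type} [Group G]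

theorem map_evalW {K : Type} [Group K] (g : G →* K) (f : S → G) (w : Word S) :
    g (evalW f w) = evalW (g ∘ f) w := by
  induction w with
  | nil => simp [evalW]
  | cons p w ih =>
    obtain ⟨s, e⟩ := p
    simp only [evalW, List.map_cons, List.prod_cons] at ih ⊢
    rw [map_mul, ih]
    cases e <;> simp

theorem evalW_pos_map {A B : Type} (f : B → G) (j : A → B) (v : List A) :
    evalW f (pos (v.map j)) = evalW (f ∘ j) (pos v) := by
  simp [evalW, pos, Function.comp_def]

theorem lift_evalW_of (f : S → G) (w : Word S) :
    FreeGroup.lift f (evalW FreeGroup.of w) = evalW f w := by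
  rw [map_evalW]
  simp [Function.comp_def]

end Words

section Respects

variable {S G : Type} [Group G]

def RespectsRels (f : S → G) (R : Set (List S × List S)) : Prop :=
  ∀ p ∈ R, evalW f (pos p.1) = evalW f (pos p.2)

namespace RespectsRels

variable {f : S → G} {R : Set (List S × List S)}

theorem lift_eq_one (h : RespectsRels f R) : ∀ r ∈ rels R, FreeGroup.lift f r = 1 := by
  rintro r ⟨p, hp, rfl⟩
  rw [map_mul, map_inv, lift_evalW_of, lift_evalW_of, mul_inv_eq_one]
  exact h p hp

def lift (h : RespectsRels f R) : PresentedGroup (rels R) →* G :=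
  PresentedGroup.toGroup h.lift_eq_one

@[simp]
theorem lift_of (h : RespectsRels f R) (s : S) : h.lift (PresentedGroup.of s) = f s :=
  PresentedGroup.toGroup.of h.lift_eq_one

theorem mono {R' : Set (List S × List S)} (h : RespectsRels f R) (hR : R' ⊆ R) :
    RespectsRels f R' :=
  fun p hp => h p (hR hp)

theorem union {R' : Set (List S × List S)} (h : RespectsRels f R) (h' : RespectsRels f R') :
    RespectsRels f (R ∪ R') := by
  rintro p (hp | hp)
  exacts [h p hp, h' p hp]

end RespectsRels

theorem respectsRels_of_presentedGroup (R : Set (List S × List S))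
    (g : PresentedGroup (rels R) →* G) : RespectsRels (fun s => g (PresentedGroup.of s)) R := by
  intro p hp
  have hrel : PresentedGroup.mk (rels R)
      (evalW FreeGroup.of (pos p.1) * (evalW FreeGroup.of (pos p.2))⁻¹) = 1 :=
    (QuotientGroup.eq_one_iff _).2 (Subgroup.subset_normalClosure ⟨p, hp, rfl⟩)
  rw [map_mul, map_inv, mul_inv_eq_one, map_evalW, map_evalW] at hrel
  have := congrArg g hrel
  rwa [map_evalW, map_evalW] at this

theorem respectsRels_image_iff {A B : Type} (f : B → G) (j : A → B)
    (R : Set (List A × List A)) :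
    RespectsRels f (Prod.map (List.map j) (List.map j) '' R) ↔ RespectsRels (f ∘ j) R := by
  simp only [RespectsRels, Set.forall_mem_image, Prod.map_fst, Prod.map_snd, evalW_pos_map]

end Respects

theorem closure_range_restrict_closure_eq_top {G ι : Type} [Group G] (g : ι → G) :
    Subgroup.closure (Set.range fun i =>
      (⟨g i, Subgroup.subset_closure (Set.mem_range_self i)⟩ : Subgroup.closure (Set.range g))) =
      ⊤ := by
  convert Subgroup.closure_closure_coe_preimage (k := Set.range g)
  ext x
  simp [Subtype.ext_iff]

section Union

variable {S : Type} {S₁ S₂ : Set S}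
  (R₁ : Set (List ↥S₁ × List ↥S₁)) (R₂ : Set (List ↥S₂ × List ↥S₂))

def unionRels : Set (List ↥(S₁ ∪ S₂) × List ↥(S₁ ∪ S₂)) :=
  (Prod.map (List.map (incl Set.subset_union_left))
    (List.map (incl Set.subset_union_left)) '' R₁) ∪
  (Prod.map (List.map (incl Set.subset_union_right))
    (List.map (incl Set.subset_union_right)) '' R₂)

theorem respectsRels_unionRels {G : Type} [Group G] {f : ↥(S₁ ∪ S₂) → G}
    (h₁ : RespectsRels (f ∘ incl Set.subset_union_left) R₁)
    (h₂ : RespectsRels (f ∘ incl Set.subset_union_right) R₂) :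
    RespectsRels f (unionRels R₁ R₂) :=
  ((respectsRels_image_iff _ _ _).2 h₁).union ((respectsRels_image_iff _ _ _).2 h₂)

def unionInl : PresentedGroup (rels R₁) →* PresentedGroup (rels (unionRels R₁ R₂)) :=
  RespectsRels.lift ((respectsRels_image_iff _ _ R₁).1
    ((respectsRels_of_presentedGroup _ (MonoidHom.id _)).mono Set.subset_union_left))

def unionInr : PresentedGroup (rels R₂) →* PresentedGroup (rels (unionRels R₁ R₂)) :=
  RespectsRels.lift ((respectsRels_image_iff _ _ R₂).1
    ((respectsRels_of_presentedGroup _ (MonoidHom.id _)).mono Set.subset_union_right))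

@[simp]
theorem unionInl_of (s : ↥S₁) :
    unionInl R₁ R₂ (PresentedGroup.of s) = PresentedGroup.of (incl Set.subset_union_left s) :=
  RespectsRels.lift_of _ s

@[simp]
theorem unionInr_of (s : ↥S₂) :
    unionInr R₁ R₂ (PresentedGroup.of s) = PresentedGroup.of (incl Set.subset_union_right s) :=
  RespectsRels.lift_of _ s

def unionFactorHom : ∀ b, Gfam (PresentedGroup (rels R₁)) (PresentedGroup (rels R₂)) b →*
    PresentedGroup (rels (unionRels R₁ R₂))
  | true => unionInl R₁ R₂
  | false => unionInr R₁ R₂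

variable {R₁ R₂} {H : Type} [Group H]
  (φ : ∀ b, H →* Gfam (PresentedGroup (rels R₁)) (PresentedGroup (rels R₂)) b)

open Classical in
noncomputable def unionGenToPushoutI (t : ↥(S₁ ∪ S₂)) : PushoutI φ :=
  if h : t.1 ∈ S₁ then PushoutI.of (φ := φ) true (PresentedGroup.of ⟨t.1, h⟩)
  else PushoutI.of (φ := φ) false (PresentedGroup.of ⟨t.1, t.2.resolve_left h⟩)

theorem unionGenToPushoutI_inl (s : ↥S₁) :
    unionGenToPushoutI φ (incl Set.subset_union_left s) =
      PushoutI.of (φ := φ) true (PresentedGroup.of s) :=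
  dif_pos s.2

structure MapsToCommonGenerators (t : ↥(S₁ ∩ S₂) → H) : Prop where
  left : ∀ c, φ true (t c) = PresentedGroup.of (incl Set.inter_subset_left c)
  right : ∀ c, φ false (t c) = PresentedGroup.of (incl Set.inter_subset_right c)

variable {φ} {t : ↥(S₁ ∩ S₂) → H}

theorem MapsToCommonGenerators.pushoutI_of_true_of_eq_of_false_of
    (ht : MapsToCommonGenerators φ t) (c : ↥(S₁ ∩ S₂)) :
    PushoutI.of (φ := φ) true (PresentedGroup.of (incl Set.inter_subset_left c)) =
      PushoutI.of (φ := φ) false (PresentedGroup.of (incl Set.inter_subset_right c)) := by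
  rw [← ht.left, ← ht.right, PushoutI.of_apply_eq_base, PushoutI.of_apply_eq_base]

theorem unionGenToPushoutI_inr (ht : MapsToCommonGenerators φ t) (s : ↥S₂) :
    unionGenToPushoutI φ (incl Set.subset_union_right s) =
      PushoutI.of (φ := φ) false (PresentedGroup.of s) := by
  by_cases h : s.1 ∈ S₁
  · exact (dif_pos h).trans (ht.pushoutI_of_true_of_eq_of_false_of ⟨s.1, h, s.2⟩)
  · exact dif_neg h

theorem respectsRels_unionGenToPushoutI (ht : MapsToCommonGenerators φ t) :
    RespectsRels (unionGenToPushoutI φ) (unionRels R₁ R₂) := by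
  refine respectsRels_unionRels R₁ R₂ ?_ ?_
  · convert respectsRels_of_presentedGroup R₁ (PushoutI.of (φ := φ) true) using 1
    exact funext (unionGenToPushoutI_inl φ)
  · convert respectsRels_of_presentedGroup R₂ (PushoutI.of (φ := φ) false) using 1
    exact funext (unionGenToPushoutI_inr ht)

theorem unionFactorHom_comp (ht : MapsToCommonGenerators φ t)
    (hgen : Subgroup.closure (Set.range t) = ⊤) (b : Bool) :
    (unionFactorHom R₁ R₂ b).comp (φ b) = (unionInl R₁ R₂).comp (φ true) := by
  cases b
  · refine MonoidHom.eq_of_eqOn_dense hgen ?_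
    rintro _ ⟨c, rfl⟩
    show unionInr R₁ R₂ (φ false (t c)) = unionInl R₁ R₂ (φ true (t c))
    rw [ht.left, ht.right, unionInr_of, unionInl_of]
    rfl
  · rfl

theorem mem_range_incl_union (u : ↥(S₁ ∪ S₂)) :
    u ∈ Set.range (incl Set.subset_union_left) ∨ u ∈ Set.range (incl Set.subset_union_right) :=
  u.2.imp (fun h => ⟨⟨u, h⟩, rfl⟩) (fun h => ⟨⟨u, h⟩, rfl⟩)

noncomputable def unionEquivPushoutI (ht : MapsToCommonGenerators φ t)
    (hgen : Subgroup.closure (Set.range t) = ⊤) :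
    PresentedGroup (rels (unionRels R₁ R₂)) ≃* PushoutI φ :=
  MonoidHom.toMulEquiv (respectsRels_unionGenToPushoutI ht).lift
    (PushoutI.lift (unionFactorHom R₁ R₂) _ (unionFactorHom_comp ht hgen))
    (PresentedGroup.ext fun u => by
      obtain ⟨s, rfl⟩ | ⟨s, rfl⟩ := mem_range_incl_union u
      · simp only [MonoidHom.comp_apply, RespectsRels.lift_of, unionGenToPushoutI_inl]
        exact unionInl_of R₁ R₂ s
      · simp only [MonoidHom.comp_apply, RespectsRels.lift_of, unionGenToPushoutI_inr ht]
        exact unionInr_of R₁ R₂ s)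
    (PushoutI.hom_ext_nonempty fun b => by
      cases b <;> refine PresentedGroup.ext fun s => ?_
      · show (respectsRels_unionGenToPushoutI ht).lift (unionInr R₁ R₂ (PresentedGroup.of s)) = _
        rw [unionInr_of, RespectsRels.lift_of, unionGenToPushoutI_inr ht]
        rfl
      · show (respectsRels_unionGenToPushoutI ht).lift (unionInl R₁ R₂ (PresentedGroup.of s)) = _
        rw [unionInl_of, RespectsRels.lift_of, unionGenToPushoutI_inl]
        rfl)

theorem unionEquivPushoutI_inl (ht : MapsToCommonGenerators φ t)
    (hgen : Subgroup.closure (Set.range t) = ⊤) (s : ↥S₁) :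
    unionEquivPushoutI ht hgen (PresentedGroup.of (incl Set.subset_union_left s)) =
      PushoutI.of (φ := φ) true (PresentedGroup.of s) :=
  ((respectsRels_unionGenToPushoutI ht).lift_of _).trans (unionGenToPushoutI_inl φ s)

theorem unionEquivPushoutI_inr (ht : MapsToCommonGenerators φ t)
    (hgen : Subgroup.closure (Set.range t) = ⊤) (s : ↥S₂) :
    unionEquivPushoutI ht hgen (PresentedGroup.of (incl Set.subset_union_right s)) =
      PushoutI.of (φ := φ) false (PresentedGroup.of s) :=
  ((respectsRels_unionGenToPushoutI ht).lift_of _).trans (unionGenToPushoutI_inr ht s)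

end Union

theorem union_presents_amalgamated_product_general {S : Type} (S₁ S₂ : Set S)
    (R₁ : Set (List ↥S₁ × List ↥S₁)) (R₂ : Set (List ↥S₂ × List ↥S₂))
    (e : commonSubgroup Set.inter_subset_left R₁ ≃*
         commonSubgroup (S := S) (C := S₁ ∩ S₂) Set.inter_subset_right R₂)
    (he : ∀ s : ↥(S₁ ∩ S₂),
      e ⟨PresentedGroup.of (incl Set.inter_subset_left s),
          Subgroup.subset_closure (Set.mem_range_self s)⟩ =
        ⟨PresentedGroup.of (incl Set.inter_subset_right s),
          Subgroup.subset_closure (Set.mem_range_self s)⟩)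
    (φ : ∀ b : Bool, ↥(commonSubgroup Set.inter_subset_left R₁) →*
        Gfam (PresentedGroup (rels R₁)) (PresentedGroup (rels R₂)) b)
    (hφt : φ true = (commonSubgroup Set.inter_subset_left R₁).subtype)
    (hφf : φ false = ((commonSubgroup (S := S) (C := S₁ ∩ S₂)
        Set.inter_subset_right R₂).subtype).comp e.toMonoidHom)
    (Rbig : Set (List ↥(S₁ ∪ S₂) × List ↥(S₁ ∪ S₂)))
    (hRbig : Rbig =
      (Prod.map (List.map (incl Set.subset_union_left))
        (List.map (incl Set.subset_union_left)) '' R₁) ∪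
      (Prod.map (List.map (incl Set.subset_union_right))
        (List.map (incl Set.subset_union_right)) '' R₂)) :
    ∃ iso : PresentedGroup (rels Rbig) ≃* PushoutI φ,
      (∀ s : ↥S₁, iso (PresentedGroup.of (incl Set.subset_union_left s)) =
        PushoutI.of (φ := φ) true (PresentedGroup.of s)) ∧
      (∀ s : ↥S₂, iso (PresentedGroup.of (incl Set.subset_union_right s)) =
        PushoutI.of (φ := φ) false (PresentedGroup.of s)) := by
  subst hRbig
  let t : ↥(S₁ ∩ S₂) → commonSubgroup Set.inter_subset_left R₁ := fun c =>
    ⟨PresentedGroup.of (incl Set.inter_subset_left c),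
      Subgroup.subset_closure (Set.mem_range_self c)⟩
  have ht : MapsToCommonGenerators φ t :=
    ⟨fun c => by rw [hφt]; rfl, fun c => by rw [hφf]; exact congrArg Subtype.val (he c)⟩
  have hgen : Subgroup.closure (Set.range t) = ⊤ := closure_range_restrict_closure_eq_top _
  exact ⟨unionEquivPushoutI ht hgen, unionEquivPushoutI_inl ht hgen,
    unionEquivPushoutI_inr ht hgen⟩

/-- if the positive presentations `(S₁, R₁)` and `(S₂, R₂)` are in
amalgam position (the identity on `S₁ ∩ S₂` induces an isomorphism `e` of the
subgroups `G'₁ ≅ G'₂` generated by `S₁ ∩ S₂`), then `(S₁ ∪ S₂, R₁ ∪ R₂)` is a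
presentation of the amalgamated product `⟨S₁|R₁⟩ *_{G'} ⟨S₂|R₂⟩`, via an
isomorphism respecting the generators. -/
theorem union_presents_amalgamated_product {S : Type} (S₁ S₂ : Set S)
    (R₁ : Set (List ↥S₁ × List ↥S₁)) (R₂ : Set (List ↥S₂ × List ↥S₂))
    (hpos₁ : Positive R₁) (hpos₂ : Positive R₂)
    (e : commonSubgroup Set.inter_subset_left R₁ ≃*
         commonSubgroup (S := S) (C := S₁ ∩ S₂) Set.inter_subset_right R₂)
    (he : ∀ s : ↥(S₁ ∩ S₂),
      e ⟨PresentedGroup.of (incl Set.inter_subset_left s),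
          Subgroup.subset_closure (Set.mem_range_self s)⟩ =
        ⟨PresentedGroup.of (incl Set.inter_subset_right s),
          Subgroup.subset_closure (Set.mem_range_self s)⟩)
    (φ : ∀ b : Bool, ↥(commonSubgroup Set.inter_subset_left R₁) →*
        Gfam (PresentedGroup (rels R₁)) (PresentedGroup (rels R₂)) b)
    (hφt : φ true = (commonSubgroup Set.inter_subset_left R₁).subtype)
    (hφf : φ false = ((commonSubgroup (S := S) (C := S₁ ∩ S₂)
        Set.inter_subset_right R₂).subtype).comp e.toMonoidHom)
    (Rbig : Set (List ↥(S₁ ∪ S₂) × List ↥(S₁ ∪ S₂)))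
    (hRbig : Rbig =
      (Prod.map (List.map (incl Set.subset_union_left))
        (List.map (incl Set.subset_union_left)) '' R₁) ∪
      (Prod.map (List.map (incl Set.subset_union_right))
        (List.map (incl Set.subset_union_right)) '' R₂)) :
    ∃ iso : PresentedGroup (rels Rbig) ≃* PushoutI φ,
      (∀ s : ↥S₁, iso (PresentedGroup.of (incl Set.subset_union_left s)) =
        PushoutI.of (φ := φ) true (PresentedGroup.of s)) ∧
      (∀ s : ↥S₂, iso (PresentedGroup.of (incl Set.subset_union_right s)) =
        PushoutI.of (φ := φ) false (PresentedGroup.of s)) :=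
  union_presents_amalgamated_product_general S₁ S₂ R₁ R₂ e he φ hφt hφf Rbig hRbig

end ArtinConj
end

section
/- In the right-angled setting, every special sequence of words w₀, w₁, …, w_m over S ∪ S⁻¹ (each w_k obtained from w_{k−1} by a special transformation of type 0, 1, 2, or ∞) lifts to a special sequence of augmented words w̃₀, w̃₁, …, w̃_m over the indexed alphabet Ŝ such that w̃₀ = w₀ (all indices zero), φ(w̃_k) = w_k for all k, and each step of the augmented sequence has the same type as the corresponding step of the original sequence. -/
/-!
A special transformation of `φ(w̃)` lifts to an augmented special transformation of `w̃` of the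
same type: the indices of the letters it touches are read off `w̃`, and for type `∞` one takes
an index larger than all indices of `w̃`. Lifting step by step from `w₀` with all indices zero
lifts the whole sequence.
-/

namespace ArtinConj

/-- The type of a special transformation: `0`, `1`, `2`, or `∞`. -/
inductive TType : Type
  | t0 | t1 | t2 | tinf
  deriving DecidableEq

/-- Special transformations on words for a right-angled presentation whose
commutation relations are given by `rel` : type `0` removes a trivial pair,
types `1` and `2` commute adjacent letters (with equal, resp. opposite, signs)
whose generators commute, and type `∞` inserts a trivial pair. -/
inductive RStep {S : Type} (rel : S → S → Prop) : TType → Word S → Word S → Prop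
  | free (w₁ w₂ : Word S) (s : S) (e : Bool) :
      RStep rel .t0 (w₁ ++ [(s, e), (s, !e)] ++ w₂) (w₁ ++ w₂)
  | comm1 (w₁ w₂ : Word S) (s t : S) (e : Bool) (h : rel s t) :
      RStep rel .t1 (w₁ ++ [(s, e), (t, e)] ++ w₂) (w₁ ++ [(t, e), (s, e)] ++ w₂)
  | comm2 (w₁ w₂ : Word S) (s t : S) (e : Bool) (h : rel s t) :
      RStep rel .t2 (w₁ ++ [(s, e), (t, !e)] ++ w₂) (w₁ ++ [(t, !e), (s, e)] ++ w₂)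
  | ins (w₁ w₂ : Word S) (s : S) (e : Bool) :
      RStep rel .tinf (w₁ ++ w₂) (w₁ ++ [(s, e), (s, !e)] ++ w₂)

/-- An augmented word: letters carry an index (their "age"). -/
abbrev AWord (S : Type) := List ((S × ℕ) × Bool)

/-- Forgetting the indices of an augmented word. -/
def forgetIdx {S : Type} (w : AWord S) : Word S := w.map fun p => (p.1.1, p.2)

/-- The augmented word with all indices zero associated to a word. -/
def withZero {S : Type} (w : Word S) : AWord S := w.map fun p => ((p.1, 0), p.2)

/-- Renaming the occurrences of `s[i]` and `s[j]` to `s[min i j]`. -/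
def rename {S : Type} [DecidableEq S] (s : S) (i j : ℕ) (w : AWord S) : AWord S :=
  w.map fun p =>
    if p.1.1 = s ∧ (p.1.2 = i ∨ p.1.2 = j) then ((s, min i j), p.2) else p

/-- The projection `π_h` erasing all letters of index `≥ h`. -/
def proj {S : Type} (h : ℕ) (w : AWord S) : AWord S :=
  w.filter fun p => p.1.2 < h

/-- The projection `π₁` to ordinary words: erase all letters of positive index
and identify `s[0]` with `s`. -/
def projOne {S : Type} (w : AWord S) : Word S :=
  forgetIdx (proj 1 w)

/-- Augmented special transformations: type `0` removes a pair
`s[i]^ε s[j]^{−ε}` and renames all remaining occurrences of `s[i]`, `s[j]` to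
`s[min i j]`; types `1` and `2` commute adjacent letters whose generators
commute; type `∞` inserts a pair `s[i]^ε s[i]^{−ε}` with `i` strictly larger
than every index occurring in the word. -/
inductive AStep {S : Type} [DecidableEq S] (rel : S → S → Prop) :
    TType → AWord S → AWord S → Prop
  | free (w₁ w₂ : AWord S) (s : S) (i j : ℕ) (e : Bool) :
      AStep rel .t0 (w₁ ++ [((s, i), e), ((s, j), !e)] ++ w₂) (rename s i j (w₁ ++ w₂))
  | comm1 (w₁ w₂ : AWord S) (s t : S) (i j : ℕ) (e : Bool) (h : rel s t) :
      AStep rel .t1 (w₁ ++ [((s, i), e), ((t, j), e)] ++ w₂)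
        (w₁ ++ [((t, j), e), ((s, i), e)] ++ w₂)
  | comm2 (w₁ w₂ : AWord S) (s t : S) (i j : ℕ) (e : Bool) (h : rel s t) :
      AStep rel .t2 (w₁ ++ [((s, i), e), ((t, j), !e)] ++ w₂)
        (w₁ ++ [((t, j), !e), ((s, i), e)] ++ w₂)
  | ins (w₁ w₂ : AWord S) (s : S) (i : ℕ) (e : Bool)
      (h : ∀ p ∈ w₁ ++ w₂, p.1.2 < i) :
      AStep rel .tinf (w₁ ++ w₂) (w₁ ++ [((s, i), e), ((s, i), !e)] ++ w₂)

/-- An augmented word is regular if, for every `h ≥ 1`, either it contains no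
letter of index `h`, or it contains exactly two, forming a commutative
`h`-pair: `r[h]^ε v r[h]^{−ε}` where `r` commutes with every generator
occurring in `v` with index `< h`. -/
def Regular {S : Type} (rel : S → S → Prop) (w : AWord S) : Prop :=
  ∀ h : ℕ, 1 ≤ h →
    (∀ p ∈ w, p.1.2 ≠ h) ∨
    ∃ (w₁ v w₂ : AWord S) (r : S) (e : Bool),
      w = w₁ ++ [((r, h), e)] ++ v ++ [((r, h), !e)] ++ w₂ ∧
      (∀ p ∈ w₁ ++ v ++ w₂, p.1.2 ≠ h) ∧
      (∀ p ∈ v, p.1.2 < h → rel r p.1.1)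

theorem exists_lift_chain {α β ι : Type*} {R : ι → α → α → Prop} {Q : ι → β → β → Prop}
    (f : β → α) (hlift : ∀ i a a' b, R i a a' → f b = a → ∃ b', Q i b b' ∧ f b' = a')
    {m : ℕ} (a : Fin (m + 1) → α) (ty : Fin m → ι)
    (hstep : ∀ k : Fin m, R (ty k) (a k.castSucc) (a k.succ)) (b₀ : β) (h₀ : f b₀ = a 0) :
    ∃ b : Fin (m + 1) → β, b 0 = b₀ ∧ (∀ k, f (b k) = a k) ∧
      ∀ k : Fin m, Q (ty k) (b k.castSucc) (b k.succ) := by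
  induction m with
  | zero =>
    refine ⟨fun _ => b₀, rfl, fun k => ?_, fun k => k.elim0⟩
    rwa [Fin.fin_one_eq_zero k]
  | succ m ih =>
    obtain ⟨b, hb₀, hba, hbQ⟩ := ih (fun k => a k.castSucc) (fun k => ty k.castSucc)
      (fun k => by simpa only [Fin.succ_castSucc] using hstep k.castSucc) h₀
    obtain ⟨b', hQ, hb'⟩ := hlift _ _ _ _ (hstep (Fin.last m)) (hba (Fin.last m))
    refine ⟨Fin.snoc b b', ?_, fun k => ?_, fun k => ?_⟩
    · simpa only [← Fin.castSucc_zero, Fin.snoc_castSucc] using hb₀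
    · induction k using Fin.lastCases with
      | last => simpa only [Fin.snoc_last, Fin.succ_last] using hb'
      | cast j => simpa only [Fin.snoc_castSucc] using hba j
    · induction k using Fin.lastCases with
      | last => simpa only [Fin.snoc_castSucc, Fin.succ_last, Fin.snoc_last] using hQ
      | cast j =>
        rw [Fin.snoc_castSucc, Fin.succ_castSucc, Fin.snoc_castSucc]
        exact hbQ j

section Forget

variable {S : Type}

@[simp]
theorem forgetIdx_append (a b : AWord S) : forgetIdx (a ++ b) = forgetIdx a ++ forgetIdx b :=
  List.map_append

@[simp]
theorem forgetIdx_withZero (u : Word S) : forgetIdx (withZero u) = u := by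
  simp [forgetIdx, withZero, Function.comp_def]

@[simp]
theorem forgetIdx_rename [DecidableEq S] (s : S) (i j : ℕ) (w : AWord S) :
    forgetIdx (rename s i j w) = forgetIdx w := by
  simp only [forgetIdx, rename, List.map_map]
  refine List.map_congr_left fun p _ => ?_
  by_cases h : p.1.1 = s ∧ (p.1.2 = i ∨ p.1.2 = j) <;> simp [h]

theorem exists_of_forgetIdx_eq_append {tw : AWord S} {u v : Word S}
    (h : forgetIdx tw = u ++ v) :
    ∃ a b, tw = a ++ b ∧ forgetIdx a = u ∧ forgetIdx b = v :=
  List.map_eq_append_iff.mp h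

theorem exists_of_forgetIdx_eq_cons {tw : AWord S} {s : S} {e : Bool} {v : Word S}
    (h : forgetIdx tw = (s, e) :: v) :
    ∃ (i : ℕ) (b : AWord S), tw = ((s, i), e) :: b ∧ forgetIdx b = v := by
  obtain ⟨⟨⟨s', i⟩, e'⟩, b, rfl, hp, hb⟩ := List.map_eq_cons_iff.mp h
  obtain ⟨rfl, rfl⟩ := Prod.mk.inj hp
  exact ⟨i, b, rfl, hb⟩

theorem exists_of_forgetIdx_eq_pair {tw : AWord S} {w₁ w₂ : Word S} {s t : S} {e f : Bool}
    (h : forgetIdx tw = w₁ ++ [(s, e), (t, f)] ++ w₂) :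
    ∃ (a b : AWord S) (i j : ℕ), tw = a ++ [((s, i), e), ((t, j), f)] ++ b ∧
      forgetIdx a = w₁ ∧ forgetIdx b = w₂ := by
  rw [List.append_assoc] at h
  obtain ⟨a, rest, rfl, ha, hrest⟩ := exists_of_forgetIdx_eq_append h
  obtain ⟨i, rest', rfl, hrest'⟩ := exists_of_forgetIdx_eq_cons hrest
  obtain ⟨j, b, rfl, hb⟩ := exists_of_forgetIdx_eq_cons hrest'
  exact ⟨a, b, i, j, by simp, ha, hb⟩

end Forget

theorem exists_index_gt {S : Type} (w : AWord S) : ∃ i, ∀ p ∈ w, p.1.2 < i :=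
  ⟨(w.map fun p => p.1.2).sum + 1, fun _ hp =>
    Nat.lt_succ_of_le (List.le_sum_of_mem (List.mem_map_of_mem hp))⟩

theorem RStep.exists_aStep {S : Type} [DecidableEq S] {rel : S → S → Prop} {t : TType}
    {u v : Word S} (h : RStep rel t u v) {tw : AWord S} (hf : forgetIdx tw = u) :
    ∃ tw', AStep rel t tw tw' ∧ forgetIdx tw' = v := by
  cases h with
  | free w₁ w₂ s e =>
    obtain ⟨a, b, i, j, rfl, ha, hb⟩ := exists_of_forgetIdx_eq_pair hf
    exact ⟨_, .free a b s i j e, by simp [ha, hb]⟩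
  | comm1 w₁ w₂ s t e hst =>
    obtain ⟨a, b, i, j, rfl, ha, hb⟩ := exists_of_forgetIdx_eq_pair hf
    exact ⟨_, .comm1 a b s t i j e hst, by simp [forgetIdx, ← ha, ← hb]⟩
  | comm2 w₁ w₂ s t e hst =>
    obtain ⟨a, b, i, j, rfl, ha, hb⟩ := exists_of_forgetIdx_eq_pair hf
    exact ⟨_, .comm2 a b s t i j e hst, by simp [forgetIdx, ← ha, ← hb]⟩
  | ins w₁ w₂ s e =>
    obtain ⟨a, b, rfl, ha, hb⟩ := exists_of_forgetIdx_eq_append hf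
    obtain ⟨i, hi⟩ := exists_index_gt (a ++ b)
    exact ⟨_, .ins a b s i e hi, by simp [forgetIdx, ← ha, ← hb]⟩

/-- every special sequence of words (for a right-angled
presentation with commutation relation `rel`) lifts to a special sequence of
augmented words, starting from the all-indices-zero lift of the first word,
projecting back to the original sequence, and with steps of the same types. -/
theorem lift_special_sequence {S : Type} [DecidableEq S]
    (rel : S → S → Prop) (m : ℕ)
    (w : Fin (m + 1) → Word S) (ty : Fin m → TType)
    (hstep : ∀ k : Fin m, RStep rel (ty k) (w k.castSucc) (w k.succ)) :
    ∃ tw : Fin (m + 1) → AWord S,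
      tw 0 = withZero (w 0) ∧
      (∀ k : Fin (m + 1), forgetIdx (tw k) = w k) ∧
      (∀ k : Fin m, AStep rel (ty k) (tw k.castSucc) (tw k.succ)) :=
  exists_lift_chain forgetIdx (fun _ _ _ _ h hf => h.exists_aStep hf) w ty hstep _
    (forgetIdx_withZero (w 0))

end ArtinConj
end
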